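/- arXiv:1308.5293 — 2 statements merged into one kernel-verified Lean document; each statement's English description precedes it below -/
import Mathlib

section
/- Let X be a bounded R-diagonal element with cumulant series f_X(z) = Σ_{n≥1} α_n z^n (where α_n = κ_{2n}(X, X*, …, X, X*)), and let a = Re X. Then the R-transform series R_a(z) = Σ_{n≥1} κ_n(a,…,a) z^n equals 2 f_X((z/2)²) as formal power series. -/
/-- The formal power series `2 · f((z/2)²)` obtained by substituting `(z/2)²` into
`f` and doubling: its coefficient at `z^{2n}` is `2 · (coeff n f) / 2^{2n}`, and its
odd coefficients vanish. -/
noncomputable def twoSubstHalfSq (f : PowerSeries ℂ) : PowerSeries ℂ :=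
  PowerSeries.mk fun k =>
    if k % 2 = 0 then 2 * PowerSeries.coeff (k / 2) f * (2 : ℂ)⁻¹ ^ k else 0

/-!
Expanding `κ_k(a, …, a)` with `a = (X + X*)/2` by multilinearity gives `2⁻ᵏ` times the sum
of `κ_k` over all words in `X` and `X*`. By R-diagonality only the two alternating words
survive, and only for even `k = 2n`, where each contributes `α_n`.
-/

theorem MultilinearMap.map_const_smul_add {R M N ι : Type*} [CommSemiring R]
    [AddCommMonoid M] [Module R M] [AddCommMonoid N] [Module R N] [Fintype ι] [DecidableEq ι]
    (f : MultilinearMap R (fun _ : ι => M) N) (c : R) (x y : M) :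
    f (fun _ => c • (x + y)) =
      c ^ Fintype.card ι • ∑ r : ι → Bool, f (fun i => if r i then x else y) := by
  have hsum : x + y = ∑ b : Bool, if b then x else y := by simp
  rw [hsum, f.map_smul_univ, Finset.prod_const, Finset.card_univ, f.map_sum]

section RDiagonal

variable {A : Type*} [AddCommMonoid A] [Module ℂ A]
  (κ : ∀ m : ℕ, MultilinearMap ℂ (fun _ : Fin m => A) ℂ) (X Y : A)

theorem sum_words_eq_zero_of_odd
    (hvanish : ∀ (m : ℕ) (ε : Fin m → Bool), 1 ≤ m →
      ¬ (m % 2 = 0 ∧ ((∀ i, ε i = decide (i.val % 2 = 0)) ∨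
          (∀ i, ε i = decide (i.val % 2 ≠ 0)))) →
      κ m (fun i => if ε i then X else Y) = 0)
    (n : ℕ) :
    ∑ r : Fin (2 * n + 1) → Bool, κ (2 * n + 1) (fun i => if r i then X else Y) = 0 :=
  Finset.sum_eq_zero fun r _ => hvanish _ r (by omega) (by omega)

theorem sum_words_eq_two_mul_of_even (α : ℕ → ℂ)
    (halt1 : ∀ n : ℕ, 1 ≤ n →
      κ (2 * n) (fun i => if i.val % 2 = 0 then X else Y) = α n)
    (halt2 : ∀ n : ℕ, 1 ≤ n →
      κ (2 * n) (fun i => if i.val % 2 = 0 then Y else X) = α n)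
    (hvanish : ∀ (m : ℕ) (ε : Fin m → Bool), 1 ≤ m →
      ¬ (m % 2 = 0 ∧ ((∀ i, ε i = decide (i.val % 2 = 0)) ∨
          (∀ i, ε i = decide (i.val % 2 ≠ 0)))) →
      κ m (fun i => if ε i then X else Y) = 0)
    {n : ℕ} (hn : 1 ≤ n) :
    ∑ r : Fin (2 * n) → Bool, κ (2 * n) (fun i => if r i then X else Y) = 2 * α n := by
  let evenWord : Fin (2 * n) → Bool := fun i => decide (i.val % 2 = 0)
  let oddWord : Fin (2 * n) → Bool := fun i => decide (i.val % 2 ≠ 0)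
  have hne : evenWord ≠ oddWord := fun h => by
    simpa [evenWord, oddWord] using congrFun h ⟨0, by omega⟩
  have hvanish' : ∀ r, r ≠ evenWord ∧ r ≠ oddWord →
      κ (2 * n) (fun i => if r i then X else Y) = 0 := by
    rintro r ⟨hr₁, hr₂⟩
    refine hvanish _ r (by omega) ?_
    rintro ⟨-, h | h⟩
    exacts [hr₁ (funext h), hr₂ (funext h)]
  rw [Fintype.sum_eq_add evenWord oddWord hne hvanish', two_mul (α n)]
  congr 1
  · rw [← halt1 n hn]
    simp [evenWord]
  · rw [← halt2 n hn]
    congr 1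
    funext i
    by_cases h : i.val % 2 = 0 <;> simp [oddWord, h]

end RDiagonal

theorem stmt8_general {A : Type*} [Ring A] [Algebra ℂ A] [StarRing A]
    (κ : ∀ m : ℕ, MultilinearMap ℂ (fun _ : Fin m => A) ℂ)
    (X : A) (α : ℕ → ℂ)
    (halt1 : ∀ n : ℕ, 1 ≤ n →
      κ (2 * n) (fun i => if i.val % 2 = 0 then X else star X) = α n)
    (halt2 : ∀ n : ℕ, 1 ≤ n →
      κ (2 * n) (fun i => if i.val % 2 = 0 then star X else X) = α n)
    (hvanish : ∀ (m : ℕ) (ε : Fin m → Bool), 1 ≤ m →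
      ¬ (m % 2 = 0 ∧ ((∀ i, ε i = decide (i.val % 2 = 0)) ∨
          (∀ i, ε i = decide (i.val % 2 ≠ 0)))) →
      κ m (fun i => if ε i then X else star X) = 0) :
    (PowerSeries.mk fun k =>
        if k = 0 then 0 else κ k (fun _ => (2 : ℂ)⁻¹ • (X + star X))) =
      twoSubstHalfSq (PowerSeries.mk fun n => if n = 0 then 0 else α n) := by
  ext k
  simp only [twoSubstHalfSq, PowerSeries.coeff_mk, MultilinearMap.map_const_smul_add,
    Fintype.card_fin]
  obtain ⟨n, rfl | rfl⟩ := Nat.even_or_odd' k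
  · rcases Nat.eq_zero_or_pos n with rfl | hn
    · simp
    rw [sum_words_eq_two_mul_of_even κ X (star X) α halt1 halt2 hvanish hn]
    simp [hn.ne', smul_eq_mul]
    ring
  · simp [sum_words_eq_zero_of_odd κ X (star X) hvanish n]

/-- Let `X` be a bounded R-diagonal element with cumulant series
`f_X(z) = Σ_{n≥1} α_n zⁿ` (where `α_n` are the alternating cumulants
`κ_{2n}(X,X*,…,X,X*)`), and let `a = Re X = (X + X*)/2`.  Then the R-transform series
`R_a(z) = Σ_{n≥1} κ_n(a,…,a) zⁿ` equals `2 f_X((z/2)²)` as formal power series.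
Free cumulants are abstracted as multilinear functionals `κ m`, with hypotheses
recording R-diagonality of `X`. -/
theorem stmt8 {A : Type*} [Ring A] [Algebra ℂ A] [StarRing A] [StarModule ℂ A]
    (κ : ∀ m : ℕ, MultilinearMap ℂ (fun _ : Fin m => A) ℂ)
    (X : A) (α : ℕ → ℂ)
    (halt1 : ∀ n : ℕ, 1 ≤ n →
      κ (2 * n) (fun i => if i.val % 2 = 0 then X else star X) = α n)
    (halt2 : ∀ n : ℕ, 1 ≤ n →
      κ (2 * n) (fun i => if i.val % 2 = 0 then star X else X) = α n)
    (hvanish : ∀ (m : ℕ) (ε : Fin m → Bool), 1 ≤ m →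
      ¬ (m % 2 = 0 ∧ ((∀ i, ε i = decide (i.val % 2 = 0)) ∨
          (∀ i, ε i = decide (i.val % 2 ≠ 0)))) →
      κ m (fun i => if ε i then X else star X) = 0) :
    (PowerSeries.mk fun k =>
        if k = 0 then 0 else κ k (fun _ => (2 : ℂ)⁻¹ • (X + star X))) =
      twoSubstHalfSq (PowerSeries.mk fun n => if n = 0 then 0 else α n) :=
  stmt8_general κ X α halt1 halt2 hvanish
end

section
/- Let (μ_n) be a sequence of probability measures on ℝ⁺ such that φφ_{μ_n}(z) = o(z) as z → ∞ in some domain Λ_{α,β}, uniformly in n. Then {μ_n} is a tight family of measures. -/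
open MeasureTheory

/-- The truncated cone `Γ_{α,β} = {x+iy ∈ ℂ⁺ : y > α|x|, |z| > β}`. -/
def GammaCone (α β : ℝ) : Set ℂ := {z | β < ‖z‖ ∧ α * |z.re| < z.im}

/-- The domain `Λ_{α,β} = {|z| > β} \ {x+iy : x > 0, |y| < αx}`. -/
def LambdaDom (α β : ℝ) : Set ℂ :=
  {z | β < ‖z‖ ∧ ¬ (0 < z.re ∧ |z.im| < α * z.re)}

/-- The Cauchy transform `G_μ(z) = ∫ 1/(z-t) dμ(t)`. -/
noncomputable def cauchyTransform (μ : Measure ℝ) (z : ℂ) : ℂ :=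
  ∫ t, (z - (t : ℂ))⁻¹ ∂μ

/-- `φ` is a Voiculescu transform of `μ` on the cone `Γ_{α,β}`: writing
`F_μ = 1/G_μ`, the function `F_μ⁻¹(z) = z + φ(z)` is a right inverse of `F_μ`
taking values in the upper half-plane, and `φ(z) = o(z)`. -/
def IsVoiculescuOnGamma (μ : Measure ℝ) (φ : ℂ → ℂ) (α β : ℝ) : Prop :=
  (∀ z ∈ GammaCone α β,
    0 < (z + φ z).im ∧ cauchyTransform μ (z + φ z) = z⁻¹) ∧
  ∀ ε > (0 : ℝ), ∃ R : ℝ, ∀ z ∈ GammaCone α β,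
    R < ‖z‖ → ‖φ z‖ ≤ ε * ‖z‖

/-- `φ` is a Voiculescu transform of a measure `μ` on `[0,∞)`, defined on the domain
`Λ_{α,β}`: `F_μ⁻¹(z) = z + φ(z)` is a right inverse of `F_μ = 1/G_μ` with values in
`ℂ \ [0,∞)`, and `φ(z) = o(z)`. -/
def IsVoiculescuOnLambda (μ : Measure ℝ) (φ : ℂ → ℂ) (α β : ℝ) : Prop :=
  (∀ z ∈ LambdaDom α β,
    ¬ ((z + φ z).im = 0 ∧ 0 ≤ (z + φ z).re) ∧ cauchyTransform μ (z + φ z) = z⁻¹) ∧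
  ∀ ε > (0 : ℝ), ∃ R : ℝ, ∀ z ∈ LambdaDom α β,
    R < ‖z‖ → ‖φ z‖ ≤ ε * ‖z‖

/-- `φφ` is the `φφ`-transform of `μ` on `Λ_{α,β}`: with
`W_μ(z) = z²/(z + φ_μ(z))`, the function `W_μ⁻¹(z) = z + φφ(z)` is a right inverse
of `W_μ`, i.e. `(z + φφ z)² = z·((z + φφ z) + φ_μ(z + φφ z))`. -/
def IsPhiPhiTransform (μ : Measure ℝ) (φφ : ℂ → ℂ) (α β : ℝ) : Prop :=
  ∃ (φ : ℂ → ℂ) (α' β' : ℝ), 0 < α' ∧ 0 < β' ∧ IsVoiculescuOnLambda μ φ α' β' ∧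
    ∀ z ∈ LambdaDom α β, (z + φφ z) ∈ LambdaDom α' β' ∧
      (z + φφ z) ^ 2 = z * ((z + φφ z) + φ (z + φφ z))

/-! Evaluate at the point `z = -x` of the negative axis. With `w = z + φφ(z)` and
`u = w + φ(w)`, the defining relations give `G_μ(u) = 1/w` and `w² = z u`, hence
`∫ t/(t-u) dμ(t) = 1 - u G_μ(u) = -φφ(z)/z`, which is uniformly small, while `u` stays
close to `-x`. For such `u` the real part of `t/(t-u)` is nonnegative on `[0,∞)` and at
least `1/9` on `(x,∞)`, so `μ(x,∞) ≤ 9 |φφ(z)/z|`. -/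

open Set

section CauchyKernel

variable {μ : Measure ℝ} {u : ℂ}

lemma neg_re_le_norm_sub_ofReal {t : ℝ} (ht : 0 ≤ t) : -u.re ≤ ‖u - t‖ := by
  have h := Complex.abs_re_le_norm (u - t)
  rw [Complex.sub_re, Complex.ofReal_re] at h
  linarith [neg_le_abs (u.re - t)]

lemma ofReal_div_sub_eq_one_sub_mul_inv {t : ℝ} (h : u - t ≠ 0) :
    (t : ℂ) / (t - u) = 1 - u * (u - t)⁻¹ := by
  have h' : (t : ℂ) - u ≠ 0 := fun h0 => h (by linear_combination -h0)
  field_simp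
  ring

lemma integrable_inv_sub_ofReal [IsFiniteMeasure μ] (hμ : ∀ᵐ t ∂μ, 0 ≤ t) (hu : u.re < 0) :
    Integrable (fun t : ℝ => (u - t)⁻¹) μ := by
  refine Integrable.mono' (integrable_const (-u.re)⁻¹)
    (measurable_const.sub Complex.measurable_ofReal).inv.aestronglyMeasurable ?_
  filter_upwards [hμ] with t ht
  rw [norm_inv]
  exact inv_anti₀ (neg_pos.2 hu) (neg_re_le_norm_sub_ofReal ht)

lemma ofReal_div_sub_ae_eq [IsFiniteMeasure μ] (hμ : ∀ᵐ t ∂μ, 0 ≤ t) (hu : u.re < 0) :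
    (fun t : ℝ => (t : ℂ) / (t - u)) =ᵐ[μ] fun t => 1 - u * (u - t)⁻¹ := by
  filter_upwards [hμ] with t ht
  refine ofReal_div_sub_eq_one_sub_mul_inv fun h => ?_
  have := neg_re_le_norm_sub_ofReal (u := u) ht
  rw [h, norm_zero] at this
  linarith

lemma integrable_ofReal_div_sub [IsFiniteMeasure μ] (hμ : ∀ᵐ t ∂μ, 0 ≤ t) (hu : u.re < 0) :
    Integrable (fun t : ℝ => (t : ℂ) / (t - u)) μ :=
  ((integrable_const 1).sub ((integrable_inv_sub_ofReal hμ hu).const_mul u)).congr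
    (ofReal_div_sub_ae_eq hμ hu).symm

lemma integral_ofReal_div_sub [IsProbabilityMeasure μ] (hμ : ∀ᵐ t ∂μ, 0 ≤ t)
    (hu : u.re < 0) : ∫ t, (t : ℂ) / (t - u) ∂μ = 1 - u * cauchyTransform μ u := by
  rw [integral_congr_ae (ofReal_div_sub_ae_eq hμ hu),
    integral_sub (integrable_const 1) ((integrable_inv_sub_ofReal hμ hu).const_mul u),
    integral_const_mul, integral_const, cauchyTransform]
  simp

lemma re_ofReal_div_sub (t : ℝ) :
    ((t : ℂ) / (t - u)).re = t * (t - u.re) / ‖(t : ℂ) - u‖ ^ 2 := by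
  rw [Complex.div_re, ← Complex.normSq_eq_norm_sq]
  simp only [Complex.ofReal_re, Complex.ofReal_im, Complex.sub_re, Complex.sub_im]
  ring

lemma re_ofReal_div_sub_nonneg {t : ℝ} (ht : 0 ≤ t) (hu : u.re ≤ 0) :
    0 ≤ ((t : ℂ) / (t - u)).re := by
  rw [re_ofReal_div_sub]
  exact div_nonneg (mul_nonneg ht (by linarith)) (sq_nonneg _)

lemma one_ninth_le_re_ofReal_div_sub {t : ℝ} (hu : u.re < 0) (hut : ‖u‖ ≤ 2 * t) :
    1 / 9 ≤ ((t : ℂ) / (t - u)).re := by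
  have ht : 0 < t := by linarith [Complex.abs_re_le_norm u, neg_le_abs u.re]
  have hnorm : ‖(t : ℂ) - u‖ ≤ 3 * t := by
    calc ‖(t : ℂ) - u‖ ≤ ‖(t : ℂ)‖ + ‖u‖ := norm_sub_le _ _
      _ ≤ 3 * t := by rw [Complex.norm_real, Real.norm_of_nonneg ht.le]; linarith
  have hpos : 0 < ‖(t : ℂ) - u‖ := by
    rw [norm_sub_rev]
    linarith [neg_re_le_norm_sub_ofReal (u := u) ht.le]
  rw [re_ofReal_div_sub, le_div_iff₀ (by positivity)]
  nlinarith [pow_le_pow_left₀ hpos.le hnorm 2]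

lemma measureReal_Ioi_le_norm_one_sub_mul_cauchyTransform [IsProbabilityMeasure μ]
    (hμ : ∀ᵐ t ∂μ, 0 ≤ t) (hu : u.re < 0) {x : ℝ} (hux : ‖u‖ ≤ 2 * x) :
    μ.real (Ioi x) ≤ 9 * ‖1 - u * cauchyTransform μ u‖ := by
  set g : ℝ → ℝ := fun t => ((t : ℂ) / (t - u)).re
  have hg : Integrable g μ := (integrable_ofReal_div_sub hμ hu).re
  have htail : 1 / 9 * μ.real (Ioi x) ≤ ∫ t in Ioi x, g t ∂μ :=
    setIntegral_ge_of_const_le_real measurableSet_Ioi (measure_ne_top _ _)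
      (fun t (ht : x < t) => one_ninth_le_re_ofReal_div_sub hu (by linarith))
      hg.integrableOn
  have hmono : ∫ t in Ioi x, g t ∂μ ≤ ∫ t, g t ∂μ :=
    setIntegral_le_integral hg
      (by filter_upwards [hμ] with t ht using re_ofReal_div_sub_nonneg ht hu.le)
  have hre : ∫ t, g t ∂μ = (∫ t, (t : ℂ) / (t - u) ∂μ).re :=
    integral_re (integrable_ofReal_div_sub hμ hu)
  rw [hre, integral_ofReal_div_sub hμ hu] at hmono
  linarith [Complex.re_le_norm (1 - u * cauchyTransform μ u)]

end CauchyKernel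

section SquareRelation

variable {z e u : ℂ}

lemma norm_sub_le_of_add_sq_eq_mul {δ : ℝ} (hz : z ≠ 0) (h : (z + e) ^ 2 = z * u)
    (he : ‖e‖ ≤ δ * ‖z‖) (hδ : δ ≤ 1) : ‖u - z‖ ≤ 3 * δ * ‖z‖ := by
  have hkey : z * (u - z) = e * (2 * z + e) := by linear_combination -h
  have h2 : ‖2 * z + e‖ ≤ 3 * ‖z‖ := by
    calc ‖2 * z + e‖ ≤ ‖2 * z‖ + ‖e‖ := norm_add_le _ _
      _ ≤ 3 * ‖z‖ := by rw [norm_mul, Complex.norm_two]; nlinarith [norm_nonneg z]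
  have hprod : ‖z‖ * ‖u - z‖ ≤ ‖z‖ * (3 * δ * ‖z‖) := by
    calc ‖z‖ * ‖u - z‖ = ‖e‖ * ‖2 * z + e‖ := by rw [← norm_mul, ← norm_mul, hkey]
      _ ≤ δ * ‖z‖ * (3 * ‖z‖) := mul_le_mul he h2 (norm_nonneg _) (norm_nonneg e |>.trans he)
      _ = ‖z‖ * (3 * δ * ‖z‖) := by ring
  exact le_of_mul_le_mul_left hprod (norm_pos_iff.2 hz)

lemma one_sub_mul_inv_of_add_sq_eq_mul (hz : z ≠ 0) (hw : z + e ≠ 0)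
    (h : (z + e) ^ 2 = z * u) : 1 - u * (z + e)⁻¹ = -(e / z) := by
  field_simp
  linear_combination h

end SquareRelation

lemma neg_ofReal_mem_LambdaDom {α β x : ℝ} (hxβ : β < x) (hx : 0 < x) :
    -(x : ℂ) ∈ LambdaDom α β := by
  refine ⟨by simpa [abs_of_pos hx] using hxβ, fun h => ?_⟩
  simp only [Complex.neg_re, Complex.ofReal_re] at h
  linarith [h.1]

lemma IsPhiPhiTransform.measureReal_Ioi_le {μ : Measure ℝ} [IsProbabilityMeasure μ]
    {φφ : ℂ → ℂ} {α β : ℝ} (hφφ : IsPhiPhiTransform μ φφ α β) (hμ : ∀ᵐ t ∂μ, 0 ≤ t)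
    {x δ : ℝ} (hxβ : β < x) (hx : 0 < x) (hδ : δ < 1 / 3) (hsmall : ‖φφ (-x)‖ ≤ δ * x) :
    μ.real (Ioi x) ≤ 9 * δ := by
  obtain ⟨φ, α', β', -, -, ⟨hV, -⟩, hW⟩ := hφφ
  set z : ℂ := -(x : ℂ)
  have hz : ‖z‖ = x := by simp [z, abs_of_pos hx]
  have hz0 : z ≠ 0 := norm_pos_iff.1 (hz ▸ hx)
  obtain ⟨hwΛ, hsq⟩ := hW z (neg_ofReal_mem_LambdaDom hxβ hx)
  set e := φφ z
  set u := z + e + φ (z + e)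
  have hG : cauchyTransform μ u = (z + e)⁻¹ := (hV _ hwΛ).2
  have he : ‖e‖ ≤ δ * ‖z‖ := hz ▸ hsmall
  have hw0 : z + e ≠ 0 := by
    intro h
    rw [eq_neg_of_add_eq_zero_right h, norm_neg, hz] at he
    nlinarith
  have huz := norm_sub_le_of_add_sq_eq_mul hz0 hsq he (by linarith)
  rw [hz] at huz
  have hure : u.re < 0 := by
    have h := Complex.re_le_norm (u - z)
    simp only [Complex.sub_re, z, Complex.neg_re, Complex.ofReal_re] at h
    nlinarith
  have hun : ‖u‖ ≤ 2 * x := by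
    have := norm_le_norm_add_norm_sub' u z
    nlinarith
  calc μ.real (Ioi x) ≤ 9 * ‖1 - u * cauchyTransform μ u‖ :=
        measureReal_Ioi_le_norm_one_sub_mul_cauchyTransform hμ hure hun
    _ = 9 * (‖e‖ / x) := by
        rw [hG, one_sub_mul_inv_of_add_sq_eq_mul hz0 hw0 hsq, norm_neg, norm_div, hz]
    _ ≤ 9 * δ := by
        rw [hz] at he
        gcongr
        exact (div_le_iff₀ hx).2 he

lemma one_sub_measureReal_Ioi_le_measureReal_Icc {μ : Measure ℝ} [IsProbabilityMeasure μ]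
    (hμ : μ (Iio 0) = 0) (x : ℝ) : 1 - μ.real (Ioi x) ≤ μ.real (Icc 0 x) := by
  rw [← probReal_compl_eq_one_sub measurableSet_Ioi, compl_Ioi]
  calc μ.real (Iic x) ≤ μ.real (Iio 0 ∪ Icc 0 x) := measureReal_mono Iic_subset_Iio_union_Icc
    _ ≤ μ.real (Iio 0) + μ.real (Icc 0 x) := measureReal_union_le _ _
    _ = μ.real (Icc 0 x) := by rw [measureReal_def, hμ, ENNReal.toReal_zero, zero_add]

theorem stmt16_general (μ : ℕ → Measure ℝ) [∀ n, IsProbabilityMeasure (μ n)]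
    (hsupp : ∀ n, μ n (Set.Iio 0) = 0)
    (φφ : ℕ → ℂ → ℂ) (α β : ℝ)
    (htrans : ∀ n, IsPhiPhiTransform (μ n) (φφ n) α β)
    (hsmall : ∀ ε > (0 : ℝ), ∃ R : ℝ, ∀ n, ∀ z ∈ LambdaDom α β,
      R < ‖z‖ → ‖φφ n z‖ ≤ ε * ‖z‖) :
    ∀ ε > (0 : ℝ), ∃ K : ℝ, 0 ≤ K ∧ ∀ n, 1 - ε ≤ (μ n (Set.Icc 0 K)).toReal := by
  intro ε hε
  obtain ⟨δ, hδ0, hδ, hδε⟩ : ∃ δ : ℝ, 0 < δ ∧ δ < 1 / 3 ∧ 9 * δ ≤ ε :=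
    ⟨min ε 1 / 9, by positivity, by linarith [min_le_right ε 1], by linarith [min_le_left ε 1]⟩
  obtain ⟨R, hR⟩ := hsmall δ hδ0
  obtain ⟨x, hRx, hβx, hx⟩ : ∃ x : ℝ, R < x ∧ β < x ∧ 0 < x :=
    ⟨max (max R β) 0 + 1, by grind, by grind, by grind⟩
  refine ⟨x, hx.le, fun n => ?_⟩
  have hz : ‖(-x : ℂ)‖ = x := by simp [abs_of_pos hx]
  have hμ : ∀ᵐ t ∂μ n, 0 ≤ t := by
    simp only [ae_iff, not_le]
    exact hsupp n
  have htail := (htrans n).measureReal_Ioi_le hμ hβx hx hδ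
    (by simpa only [hz] using hR n _ (neg_ofReal_mem_LambdaDom hβx hx) (by rwa [hz]))
  calc 1 - ε ≤ 1 - (μ n).real (Ioi x) := by linarith
    _ ≤ (μ n).real (Icc 0 x) := one_sub_measureReal_Ioi_le_measureReal_Icc (hsupp n) x

/-- If `(μ_n)` are probability measures on `ℝ⁺` whose `φφ`-transforms
satisfy `φφ_{μ_n}(z) = o(z)` as `z → ∞` in some domain `Λ_{α,β}`, uniformly in `n`,
then `{μ_n}` is a tight family. -/
theorem stmt16 (μ : ℕ → Measure ℝ) [∀ n, IsProbabilityMeasure (μ n)]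
    (hsupp : ∀ n, μ n (Set.Iio 0) = 0)
    (φφ : ℕ → ℂ → ℂ) (α β : ℝ) (hα : 0 < α) (hβ : 0 < β)
    (htrans : ∀ n, IsPhiPhiTransform (μ n) (φφ n) α β)
    (hsmall : ∀ ε > (0 : ℝ), ∃ R : ℝ, ∀ n, ∀ z ∈ LambdaDom α β,
      R < ‖z‖ → ‖φφ n z‖ ≤ ε * ‖z‖) :
    ∀ ε > (0 : ℝ), ∃ K : ℝ, 0 ≤ K ∧ ∀ n, 1 - ε ≤ (μ n (Set.Icc 0 K)).toReal :=
  stmt16_general μ hsupp φφ α β htrans hsmall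
end
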